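/- Suppose a signal X of even length T is perturbed only in its approximation Haar coefficients by δ_A, with |δ_A(k)| ≤ ε for all k. Then the total absolute change in the even-lag autocorrelations is bounded by Σ_{m=0}^{T/2−1} |ρ_A(2m) − ρ(2m)| ≤ ε·(T/2 + 1)·Σ_{k=1}^{T/2} |C^L_k| + ε²·(T² + 2T)/8. -/

import Mathlib

/-!
Write `N = T / 2`. Changing only the approximation coefficient of the `k`-th pair shifts both
samples `X (2k-1)` and `X (2k)` by `δ_A(k) / √2`. At an even lag `2m` the lagged products pair up
accordingly, and the change of `ρ(2m)` collapses to
`∑_{j ≤ N-m} (δ_A(j+m) C^L_j + δ_A(j) C^L_{j+m} + δ_A(j) δ_A(j+m))`.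
Each term is at most `ε |C^L_j| + ε |C^L_{j+m}| + ε²`; summed over `m`, every `|C^L_k|` is counted
`N + 1` times and `ε²` is counted `N (N + 1) / 2` times.
-/

open Finset

lemma sum_Icc_two_mul {M : Type*} [AddCommMonoid M] (f : ℕ → M) (n : ℕ) :
    ∑ t ∈ Icc 1 (2 * n), f t = ∑ j ∈ Icc 1 n, (f (2 * j - 1) + f (2 * j)) := by
  induction n with
  | zero => simp
  | succ n ih =>
    rw [show 2 * (n + 1) = 2 * n + 1 + 1 by ring, sum_Icc_succ_top (by omega),
      sum_Icc_succ_top (by omega), ih, sum_Icc_succ_top (by omega),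
      show 2 * (n + 1) - 1 = 2 * n + 1 by omega, show 2 * (n + 1) = 2 * n + 1 + 1 by ring,
      add_assoc]

lemma sum_range_sub_eq_sum_Icc {M : Type*} [AddCommMonoid M] (f : ℕ → M) (n : ℕ) :
    ∑ m ∈ range n, f (n - m) = ∑ k ∈ Icc 1 n, f k := by
  induction n with
  | zero => simp
  | succ n ih =>
    rw [sum_range_succ', sum_Icc_succ_top (by omega), ← ih]
    simp only [Nat.add_sub_add_right, Nat.sub_zero]

lemma sum_range_sum_Icc_add_lag (f : ℕ → ℝ) (c : ℝ) (N : ℕ) :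
    ∑ m ∈ range N, ∑ j ∈ Icc 1 (N - m), (f j + f (j + m) + c) =
      (N + 1) * ∑ k ∈ Icc 1 N, f k + c * (N * (N + 1) / 2) := by
  induction N with
  | zero => simp
  | succ N ih =>
    -- passing from `N` to `N + 1` adds exactly the terms with `j + m = N + 1`
    have top : ∀ m ∈ range N, ∑ j ∈ Icc 1 (N + 1 - m), (f j + f (j + m) + c) =
        ∑ j ∈ Icc 1 (N - m), (f j + f (j + m) + c) + (f (N + 1 - m) + f (N + 1) + c) := by
      intro m hm
      rw [mem_range] at hm
      rw [show N + 1 - m = N - m + 1 by omega, sum_Icc_succ_top (by omega),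
        show N - m + 1 + m = N + 1 by omega]
    have last : ∑ m ∈ range N, f (N + 1 - m) + f 1 = ∑ k ∈ Icc 1 N, f k + f (N + 1) := by
      rw [← sum_Icc_succ_top (by omega), ← sum_range_sub_eq_sum_Icc, sum_range_succ,
        Nat.add_sub_cancel_left]
    rw [sum_range_succ, sum_congr rfl top, sum_add_distrib, ih, sum_add_distrib,
      sum_add_distrib, sum_Icc_succ_top (by omega)]
    simp only [Nat.add_sub_cancel_left, Icc_self, sum_singleton, sum_const, card_range,
      nsmul_eq_mul, add_comm 1 N]
    push_cast
    linear_combination last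

lemma haar_inverse_add_approx {a b cL cH : ℝ} (δ : ℝ)
    (hL : cL = (a + b) / Real.sqrt 2) (hH : cH = (a - b) / Real.sqrt 2) :
    (cL + δ) / Real.sqrt 2 + cH / Real.sqrt 2 = a + δ / Real.sqrt 2 ∧
      (cL + δ) / Real.sqrt 2 - cH / Real.sqrt 2 = b + δ / Real.sqrt 2 := by
  have h2 : Real.sqrt 2 ^ 2 = 2 := Real.sq_sqrt (by norm_num)
  subst hL hH
  constructor
  · field_simp
    linear_combination (-a) * h2
  · field_simp
    linear_combination (-b) * h2

lemma sum_lag_two_mul_sub_eq (X XA CL δ : ℕ → ℝ) {N m : ℕ} (hm : m ≤ N)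
    (hCL : ∀ k ∈ Icc 1 N, CL k = (X (2 * k - 1) + X (2 * k)) / Real.sqrt 2)
    (hXA1 : ∀ k ∈ Icc 1 N, XA (2 * k - 1) = X (2 * k - 1) + δ k / Real.sqrt 2)
    (hXA0 : ∀ k ∈ Icc 1 N, XA (2 * k) = X (2 * k) + δ k / Real.sqrt 2) :
    ∑ t ∈ Icc 1 (2 * N - 2 * m), XA (t + 2 * m) * XA t -
        ∑ t ∈ Icc 1 (2 * N - 2 * m), X (t + 2 * m) * X t =
      ∑ j ∈ Icc 1 (N - m), (δ (j + m) * CL j + δ j * CL (j + m) + δ j * δ (j + m)) := by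
  have h2 : Real.sqrt 2 ^ 2 = 2 := Real.sq_sqrt (by norm_num)
  rw [← sum_sub_distrib, show 2 * N - 2 * m = 2 * (N - m) by omega, sum_Icc_two_mul]
  refine sum_congr rfl fun j hj => ?_
  rw [mem_Icc] at hj
  have hj' : j ∈ Icc 1 N := mem_Icc.2 ⟨hj.1, by omega⟩
  have hjm : j + m ∈ Icc 1 N := mem_Icc.2 ⟨by omega, by omega⟩
  rw [show 2 * j - 1 + 2 * m = 2 * (j + m) - 1 by omega, show 2 * j + 2 * m = 2 * (j + m) by ring,
    hXA1 _ hj', hXA0 _ hj', hXA1 _ hjm, hXA0 _ hjm, hCL _ hj', hCL _ hjm]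
  field_simp
  linear_combination (-(δ j * δ (j + m))) * h2

lemma abs_mul_add_mul_add_mul_le {a a' c c' ε : ℝ} (ha : |a| ≤ ε) (ha' : |a'| ≤ ε) :
    |a' * c + a * c' + a * a'| ≤ ε * |c| + ε * |c'| + ε ^ 2 := by
  calc |a' * c + a * c' + a * a'| ≤ |a'| * |c| + |a| * |c'| + |a| * |a'| := by
        simpa only [abs_mul] using abs_add_three (a' * c) (a * c') (a * a')
    _ ≤ ε * |c| + ε * |c'| + ε * ε := by
        gcongr
        exact (abs_nonneg _).trans ha
    _ = ε * |c| + ε * |c'| + ε ^ 2 := by ring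

theorem autocorrelation_bound_approx_general
    (T : ℕ) (hTeven : Even T)
    (X XA CL CH δA : ℕ → ℝ) (ε : ℝ)
    (hδ : ∀ k ∈ Finset.Icc 1 (T / 2), |δA k| ≤ ε)
    (hCL : ∀ k ∈ Finset.Icc 1 (T / 2),
      CL k = (X (2 * k - 1) + X (2 * k)) / Real.sqrt 2)
    (hCH : ∀ k ∈ Finset.Icc 1 (T / 2),
      CH k = (X (2 * k - 1) - X (2 * k)) / Real.sqrt 2)
    (hXA1 : ∀ k ∈ Finset.Icc 1 (T / 2),
      XA (2 * k - 1) = (CL k + δA k) / Real.sqrt 2 + CH k / Real.sqrt 2)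
    (hXA0 : ∀ k ∈ Finset.Icc 1 (T / 2),
      XA (2 * k) = (CL k + δA k) / Real.sqrt 2 - CH k / Real.sqrt 2)
    (ρ ρA : ℕ → ℝ)
    (hρ : ∀ l, ρ l = ∑ t ∈ Finset.Icc 1 (T - l), X (t + l) * X t)
    (hρA : ∀ l, ρA l = ∑ t ∈ Finset.Icc 1 (T - l), XA (t + l) * XA t) :
    ∑ m ∈ Finset.range (T / 2), |ρA (2 * m) - ρ (2 * m)| ≤
      ε * ((T : ℝ) / 2 + 1) * ∑ k ∈ Finset.Icc 1 (T / 2), |CL k| +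
      ε ^ 2 * ((T : ℝ) ^ 2 + 2 * (T : ℝ)) / 8 := by
  set N := T / 2
  have hTN : T = 2 * N := by obtain ⟨r, hr⟩ := hTeven; omega
  have diff : ∀ m ∈ range N, ρA (2 * m) - ρ (2 * m) =
      ∑ j ∈ Icc 1 (N - m), (δA (j + m) * CL j + δA j * CL (j + m) + δA j * δA (j + m)) := by
    intro m hm
    rw [hρA, hρ, hTN]
    refine sum_lag_two_mul_sub_eq X XA CL δA (mem_range.1 hm).le hCL
      (fun k hk => ?_) (fun k hk => ?_)
    · rw [hXA1 k hk]; exact (haar_inverse_add_approx _ (hCL k hk) (hCH k hk)).1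
    · rw [hXA0 k hk]; exact (haar_inverse_add_approx _ (hCL k hk) (hCH k hk)).2
  calc ∑ m ∈ range N, |ρA (2 * m) - ρ (2 * m)|
      ≤ ∑ m ∈ range N, ∑ j ∈ Icc 1 (N - m), (ε * |CL j| + ε * |CL (j + m)| + ε ^ 2) := by
        refine sum_le_sum fun m hm => ?_
        rw [diff m hm]
        refine (Finset.abs_sum_le_sum_abs _ _).trans (sum_le_sum fun j hj => ?_)
        have hm' := mem_range.1 hm
        have hj' := mem_Icc.1 hj
        exact abs_mul_add_mul_add_mul_le (hδ _ (mem_Icc.2 ⟨by omega, by omega⟩))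
          (hδ _ (mem_Icc.2 ⟨by omega, by omega⟩))
    _ = (N + 1) * ∑ k ∈ Icc 1 N, ε * |CL k| + ε ^ 2 * (N * (N + 1) / 2) :=
        sum_range_sum_Icc_add_lag (fun k => ε * |CL k|) _ N
    _ = ε * ((T : ℝ) / 2 + 1) * ∑ k ∈ Icc 1 N, |CL k| +
          ε ^ 2 * ((T : ℝ) ^ 2 + 2 * (T : ℝ)) / 8 := by
        rw [← mul_sum, hTN]
        push_cast
        ring

/-- Bound on the total absolute change of even-lag autocorrelations under
bounded approximation-coefficient perturbations. -/
theorem autocorrelation_bound_approx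
    (T : ℕ) (hT : 0 < T) (hTeven : Even T)
    (X XA CL CH δA : ℕ → ℝ) (ε : ℝ) (hε : 0 ≤ ε)
    (hδ : ∀ k ∈ Finset.Icc 1 (T / 2), |δA k| ≤ ε)
    (hCL : ∀ k ∈ Finset.Icc 1 (T / 2),
      CL k = (X (2 * k - 1) + X (2 * k)) / Real.sqrt 2)
    (hCH : ∀ k ∈ Finset.Icc 1 (T / 2),
      CH k = (X (2 * k - 1) - X (2 * k)) / Real.sqrt 2)
    (hXA1 : ∀ k ∈ Finset.Icc 1 (T / 2),
      XA (2 * k - 1) = (CL k + δA k) / Real.sqrt 2 + CH k / Real.sqrt 2)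
    (hXA0 : ∀ k ∈ Finset.Icc 1 (T / 2),
      XA (2 * k) = (CL k + δA k) / Real.sqrt 2 - CH k / Real.sqrt 2)
    (ρ ρA : ℕ → ℝ)
    (hρ : ∀ l, ρ l = ∑ t ∈ Finset.Icc 1 (T - l), X (t + l) * X t)
    (hρA : ∀ l, ρA l = ∑ t ∈ Finset.Icc 1 (T - l), XA (t + l) * XA t) :
    ∑ m ∈ Finset.range (T / 2), |ρA (2 * m) - ρ (2 * m)| ≤
      ε * ((T : ℝ) / 2 + 1) * ∑ k ∈ Finset.Icc 1 (T / 2), |CL k| +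
      ε ^ 2 * ((T : ℝ) ^ 2 + 2 * (T : ℝ)) / 8 :=
  autocorrelation_bound_approx_general T hTeven X XA CL CH δA ε hδ hCL hCH hXA1 hXA0 ρ ρA hρ hρA
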